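/- arXiv:math/0407116 — 13 statements merged into one kernel-verified Lean document; each statement's English description precedes it below -/
import Mathlib

section
/- For every vector L : ZMod n → ZMod 2, the cyclic convolution of L with itself equals the discrete Baker transform of L, i.e. L ⊠ L = 𝔟L; consequently C(L) * C(L) = C(𝔟L). -/
/-- The circulant matrix of a vector `X : ZMod n → ZMod 2`, with entries
`C(X) i j = X (j - i)`. -/
def circulantVec {n : ℕ} (X : ZMod n → ZMod 2) : Matrix (ZMod n) (ZMod n) (ZMod 2) :=
  Matrix.of fun i j => X (j - i)

/-- The cyclic convolution `(X ⊠ Y) j = ∑ k, X k * Y (j - k)`. -/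
def cyclicConv {n : ℕ} [NeZero n] (X Y : ZMod n → ZMod 2) : ZMod n → ZMod 2 :=
  fun j => ∑ k : ZMod n, X k * Y (j - k)

/-- The discrete Baker transformation: `(𝔟 X) i = ∑_{j : 2*j = i} X j`. -/
def baker {n : ℕ} [NeZero n] (X : ZMod n → ZMod 2) : ZMod n → ZMod 2 :=
  fun i => ∑ j ∈ Finset.univ.filter (fun j : ZMod n => (2 : ZMod n) * j = i), X j

lemma zmod2_mul_self (x : ZMod 2) : x * x = x := by revert x; decide

lemma conv_aux {n : ℕ} [NeZero n] (L : ZMod n → ZMod 2) (j : ZMod n) :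
    cyclicConv L L j = baker L j := by
  unfold cyclicConv baker
  rw [← Finset.sum_filter_add_sum_filter_not Finset.univ (fun k : ZMod n => (2 : ZMod n) * k = j)]
  have h1 : ∑ k ∈ Finset.univ.filter (fun k : ZMod n => (2 : ZMod n) * k = j),
      L k * L (j - k) = ∑ k ∈ Finset.univ.filter (fun k : ZMod n => (2 : ZMod n) * k = j), L k := by
    apply Finset.sum_congr rfl
    intro k hk
    simp only [Finset.mem_filter] at hk
    have : j - k = k := by rw [← hk.2]; ring
    rw [this, zmod2_mul_self]
  have h2 : ∑ k ∈ Finset.univ.filter (fun k : ZMod n => ¬ (2 : ZMod n) * k = j),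
      L k * L (j - k) = 0 := by
    apply Finset.sum_involution (fun k _ => j - k)
    · intro k _
      have : j - (j - k) = k := by ring
      rw [this, mul_comm]
      exact CharTwo.add_self_eq_zero _
    · intro k hk _
      simp only [Finset.mem_filter] at hk
      intro h
      apply hk.2
      linear_combination -h
    · intro k hk
      simp only [Finset.mem_filter, Finset.mem_univ, true_and] at hk ⊢
      intro h
      apply hk
      linear_combination -h
    · intro k _
      ring
  rw [h1, h2, add_zero]

theorem conv_self_eq_baker {n : ℕ} [NeZero n] (L : ZMod n → ZMod 2) :
    cyclicConv L L = baker L ∧ circulantVec L * circulantVec L = circulantVec (baker L) := by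
  constructor
  · funext j; exact conv_aux L j
  · ext i j
    rw [Matrix.mul_apply]
    show ∑ k : ZMod n, L (k - i) * L (j - k) = baker L (j - i)
    rw [← conv_aux L (j - i)]
    unfold cyclicConv
    apply Fintype.sum_equiv (Equiv.subRight i)
    intro k
    simp only [Equiv.subRight_apply]
    congr 1 <;> ring
end

section
/- Conservation principle: for every X : ZMod n → ZMod 2, the determinant over ZMod 2 of the circulant of X equals the determinant of the circulant of its Baker transform: det C(X) = det C(𝔟X). -/
private lemma mulself : ∀ x : ZMod 2, x * x = x := by decide

private lemma sum_key {n : ℕ} [NeZero n] (X : ZMod n → ZMod 2) (d : ZMod n) :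
    ∑ k : ZMod n, X k * X (d - k) = baker X d := by
  classical
  have hiff : ∀ k : ZMod n, ((2 : ZMod n) * k = d) ↔ d - k = k := by
    intro k
    constructor
    · intro h; rw [← h, two_mul]; ring
    · intro h
      have h2 : d - k + k = k + k := by rw [h]
      rw [sub_add_cancel, ← two_mul] at h2
      exact h2.symm
  rw [baker, ← Finset.sum_filter_add_sum_filter_not Finset.univ
    (fun k : ZMod n => (2 : ZMod n) * k = d) (fun k => X k * X (d - k))]
  have h1 : ∑ k ∈ Finset.univ.filter (fun k : ZMod n => (2 : ZMod n) * k = d),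
      X k * X (d - k) = ∑ k ∈ Finset.univ.filter (fun k : ZMod n => (2 : ZMod n) * k = d), X k := by
    apply Finset.sum_congr rfl
    intro k hk
    rw [Finset.mem_filter] at hk
    rw [(hiff k).mp hk.2, mulself]
  have h2 : ∑ k ∈ Finset.univ.filter (fun k : ZMod n => ¬ (2 : ZMod n) * k = d),
      X k * X (d - k) = 0 := by
    apply Finset.sum_involution (fun k _ => d - k)
    · intro a _
      simp only [sub_sub_cancel]
      rw [mul_comm (X (d - a))]
      exact CharTwo.add_self_eq_zero _
    · intro a ha _
      rw [Finset.mem_filter] at ha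
      exact fun hcon => ha.2 ((hiff a).mpr hcon)
    · intro a ha
      rw [Finset.mem_filter] at ha ⊢
      refine ⟨Finset.mem_univ _, fun hcon => ha.2 ?_⟩
      have h3 := (hiff (d - a)).mp hcon
      rw [sub_sub_cancel] at h3
      exact (hiff a).mpr h3.symm
    · intro a _; simp
  rw [h1, h2, add_zero]

theorem det_circulant_baker {n : ℕ} [NeZero n] (X : ZMod n → ZMod 2) :
    (circulantVec X).det = (circulantVec (baker X)).det := by
  classical
  have hC : circulantVec (baker X) = circulantVec X * circulantVec X := by
    ext i j
    rw [Matrix.mul_apply]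
    have : ∑ k : ZMod n, circulantVec X i k * circulantVec X k j
        = ∑ k : ZMod n, X k * X ((j - i) - k) := by
      refine Fintype.sum_equiv (Equiv.subRight i) _ _ (fun k => ?_)
      simp only [circulantVec, Equiv.subRight_apply, Matrix.of_apply]
      congr 2
      ring
    rw [this, sum_key]
    rfl
  rw [hC, Matrix.det_mul, mulself]
end

section
/- For every X : ZMod n → ZMod 2, the rank of the circulant of the Baker transform of X is at most the rank of the circulant of X: rank C(𝔟X) ≤ rank C(X). -/
/-- Over `ZMod 2`, the circulant of the Baker transform is the square of the circulant:
squaring is the Frobenius on polynomials mod `t^n - 1`. -/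
lemma circulant_baker_eq_sq {n : ℕ} [NeZero n] (X : ZMod n → ZMod 2) :
    circulantVec (baker X) = circulantVec X * circulantVec X := by
  ext i j
  simp only [circulantVec, Matrix.mul_apply, Matrix.of_apply, baker]
  have key : ∀ d : ZMod n,
      (∑ j ∈ Finset.univ.filter (fun j : ZMod n => (2 : ZMod n) * j = d), X j)
        = ∑ k : ZMod n, X k * X (d - k) := by
    intro d
    rw [← Finset.sum_filter_add_sum_filter_not Finset.univ
      (fun k : ZMod n => (2 : ZMod n) * k = d) (fun k => X k * X (d - k))]
    have h1 : ∑ k ∈ Finset.univ.filter (fun k : ZMod n => (2 : ZMod n) * k = d),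
        X k * X (d - k) = ∑ k ∈ Finset.univ.filter (fun k : ZMod n => (2 : ZMod n) * k = d), X k := by
      apply Finset.sum_congr rfl
      intro k hk
      simp only [Finset.mem_filter] at hk
      have hdk : d - k = k := by rw [← hk.2]; ring
      rw [hdk]
      have : ∀ x : ZMod 2, x * x = x := by decide
      exact this (X k)
    have h2 : ∑ k ∈ Finset.univ.filter (fun k : ZMod n => ¬ (2 : ZMod n) * k = d),
        X k * X (d - k) = 0 := by
      apply Finset.sum_involution (fun k _ => d - k)
      · intro a _
        have h : d - (d - a) = a := by ring
        rw [h, mul_comm]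
        have : ∀ x : ZMod 2, x + x = 0 := by decide
        exact this _
      · intro a ha _ heq
        simp only [Finset.mem_filter, Finset.mem_univ, true_and] at ha
        exact ha (by linear_combination (-1 : ZMod n) * heq)
      · intro a ha
        simp only [Finset.mem_filter, Finset.mem_univ, true_and] at *
        intro h2a
        exact ha (by linear_combination (-1 : ZMod n) * h2a)
      · intro a _; ring
    rw [h1, h2, add_zero]
  rw [key (j - i)]
  rw [← Fintype.sum_equiv (Equiv.addRight i) _ (fun k => X (k - i) * X (j - k)) (fun m => by
    simp only [Equiv.coe_addRight]
    congr 1 <;> congr 1 <;> ring)]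
  refine Finset.sum_congr rfl fun x _ => ?_
  have h1 : j - i - x = j - (x + i) := by ring
  have h2 : x + i - i = x := by ring
  rw [h1, h2]

theorem rank_circulant_baker_le {n : ℕ} [NeZero n] (X : ZMod n → ZMod 2) :
    (circulantVec (baker X)).rank ≤ (circulantVec X).rank := by
  rw [circulant_baker_eq_sq]
  exact Matrix.rank_mul_le_left _ _
end

section
/- For every X : ZMod n → ZMod 2 and every natural number i, the circulant of the i-th Baker iterate of X equals the 2^i-th power of the circulant of X: C(𝔟^i X) = C(X)^(2^i). -/
lemma circulant_baker {n : ℕ} [NeZero n] (X : ZMod n → ZMod 2) :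
    circulantVec (baker X) = circulantVec X ^ 2 := by
  ext i j
  simp only [pow_two, Matrix.mul_apply, circulantVec, Matrix.of_apply, baker]
  have h1 : ∑ k : ZMod n, X (k - i) * X (j - k)
      = ∑ a : ZMod n, X a * X ((j - i) - a) := by
    apply Fintype.sum_equiv (Equiv.subRight i)
    intro k
    simp only [Equiv.subRight_apply]
    congr 1
    ring_nf
  rw [h1]
  set d := j - i with hd
  rw [← Finset.sum_filter_add_sum_filter_not Finset.univ (fun a => (2:ZMod n)*a = d)]
  have h2 : ∑ a ∈ Finset.univ.filter (fun a => ¬ (2:ZMod n)*a = d), X a * X (d - a) = 0 := by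
    apply Finset.sum_involution (fun a _ => d - a)
    · intro a ha
      rw [sub_sub_cancel, mul_comm]
      exact CharTwo.add_self_eq_zero _
    · intro a ha _
      simp only [Finset.mem_filter, Finset.mem_univ, true_and] at ha
      intro h
      exact ha (by linear_combination -h)
    · intro a ha
      simp only [Finset.mem_filter, Finset.mem_univ, true_and] at *
      intro h
      exact ha (by linear_combination -h)
    · intro a ha
      exact sub_sub_cancel d a
  rw [h2, add_zero]
  apply Finset.sum_congr rfl
  intro a ha
  simp only [Finset.mem_filter, Finset.mem_univ, true_and] at ha
  have hda : d - a = a := by linear_combination -ha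
  rw [hda]
  have hx : ∀ x : ZMod 2, x * x = x := by decide
  exact (hx _).symm

theorem circulant_baker_iterate {n : ℕ} [NeZero n] (X : ZMod n → ZMod 2) (i : ℕ) :
    circulantVec (baker^[i] X) = (circulantVec X) ^ (2 ^ i) := by
  induction i generalizing X with
  | zero => simp
  | succ k ih =>
    rw [Function.iterate_succ_apply, ih (baker X), circulant_baker, ← pow_mul, ← pow_succ']
end

section
/- If n ≥ 1 is odd then for every X : ZMod n → ZMod 2, applying the discrete Baker transformation d times returns X, where d is the multiplicative order of 2 modulo n (with d = 1 when n = 1): 𝔟^d X = X. -/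
lemma baker_apply_unit {n : ℕ} [NeZero n] (u : (ZMod n)ˣ) (hu : (u : ZMod n) = 2)
    (X : ZMod n → ZMod 2) (i : ZMod n) :
    baker X i = X ((u⁻¹ : (ZMod n)ˣ) * i) := by
  unfold baker
  rw [Finset.sum_eq_single ((u⁻¹ : (ZMod n)ˣ) * i)]
  · intro b hb hne
    exact absurd (by
      have h2 : (2 : ZMod n) * b = i := (Finset.mem_filter.mp hb).2
      calc b = (u⁻¹ : (ZMod n)ˣ) * ((u : ZMod n) * b) := by
              rw [← mul_assoc, ← Units.val_mul, inv_mul_cancel, Units.val_one, one_mul]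
        _ = (u⁻¹ : (ZMod n)ˣ) * i := by rw [hu, h2]) hne
  · intro h
    exact absurd (Finset.mem_filter.mpr ⟨Finset.mem_univ _, by
      rw [← hu, ← mul_assoc, Units.mul_inv, one_mul]⟩) h

lemma baker_iter_unit {n : ℕ} [NeZero n] (u : (ZMod n)ˣ) (hu : (u : ZMod n) = 2)
    (X : ZMod n → ZMod 2) (k : ℕ) (i : ZMod n) :
    baker^[k] X i = X (((u⁻¹ : (ZMod n)ˣ) ^ k : (ZMod n)ˣ) * i) := by
  induction k generalizing i with
  | zero => simp
  | succ k ih =>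
    rw [Function.iterate_succ_apply', baker_apply_unit u hu, ih]
    congr 1
    push_cast
    rw [pow_succ]
    ring

theorem baker_iterate_ord_eq_self {n : ℕ} [NeZero n] (hodd : Odd n)
    (X : ZMod n → ZMod 2) :
    baker^[if n = 1 then 1 else orderOf (2 : ZMod n)] X = X := by
  by_cases h1 : n = 1
  · subst h1
    funext i
    rw [if_pos rfl, Function.iterate_one, baker_apply_unit 1 (by decide)]
    simp
  · have hcop : Nat.Coprime 2 n := by
      refine (Nat.prime_two.coprime_iff_not_dvd).mpr ?_
      intro hdvd
      rw [Nat.odd_iff] at hodd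
      omega
    set u : (ZMod n)ˣ := ZMod.unitOfCoprime 2 hcop with hu
    have hcu : (u : ZMod n) = 2 := by simp [hu, ZMod.coe_unitOfCoprime]
    have hd : u ^ orderOf (2 : ZMod n) = 1 := by
      ext
      push_cast
      rw [hcu, pow_orderOf_eq_one]
    funext i
    rw [if_neg h1, baker_iter_unit u hcu, inv_pow, hd, inv_one, Units.val_one, one_mul]
end

section
/- Suppose n = 2*n' with n' ≥ 1 and X : ZMod n → ZMod 2. Then (𝔟X) i = 0 for every i : ZMod n whose canonical representative i.val is odd; moreover, defining Y : ZMod n' → ZMod 2 by Y k = (𝔟X) ((2 * k.val : ℕ) : ZMod n), one has (𝔟^2 X) ((2 * k.val : ℕ) : ZMod n) = (𝔟Y) k for every k : ZMod n', where the second 𝔟 is the Baker transformation on ZMod n' → ZMod 2. -/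
theorem baker_even_reduction (n n' : ℕ) [NeZero n] [NeZero n'] (h : n = 2 * n')
    (X : ZMod n → ZMod 2) :
    (∀ i : ZMod n, Odd i.val → baker X i = 0) ∧
    (∀ k : ZMod n',
      baker^[2] X ((2 * k.val : ℕ) : ZMod n) =
        baker (fun k : ZMod n' => baker X ((2 * k.val : ℕ) : ZMod n)) k) := by
  subst h
  have hn' : 0 < n' := Nat.pos_of_ne_zero (NeZero.ne n')
  have hval2 : ∀ j : ZMod (2 * n'), ((2 : ZMod (2 * n')) * j).val = 2 * (j.val % n') := by
    intro j
    have e : (2 : ZMod (2 * n')) * j = ((2 * j.val : ℕ) : ZMod (2 * n')) := by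
      push_cast [ZMod.natCast_val, ZMod.cast_id]; ring
    conv_lhs => rw [e]
    rw [ZMod.val_natCast, Nat.mul_mod_mul_left]
  have hodd : ∀ i : ZMod (2 * n'), Odd i.val → baker X i = 0 := by
    intro i hi
    apply Finset.sum_eq_zero
    intro j hj
    exfalso
    simp only [Finset.mem_filter] at hj
    have := hval2 j
    rw [hj.2] at this
    obtain ⟨t, ht⟩ := hi
    omega
  refine ⟨hodd, ?_⟩
  intro k
  have hk : k.val < n' := ZMod.val_lt k
  show baker (baker X) ((2 * k.val : ℕ) : ZMod (2 * n')) = _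
  set f := baker X with hf
  show (∑ j ∈ Finset.univ.filter
      (fun j : ZMod (2 * n') => (2 : ZMod (2 * n')) * j = ((2 * k.val : ℕ) : ZMod (2 * n'))), f j)
    = ∑ m ∈ Finset.univ.filter (fun m : ZMod n' => (2 : ZMod n') * m = k),
        f ((2 * m.val : ℕ) : ZMod (2 * n'))
  -- value of the target index
  have hival : (((2 * k.val : ℕ) : ZMod (2 * n'))).val = 2 * k.val := by
    rw [ZMod.val_natCast, Nat.mul_mod_mul_left, Nat.mod_eq_of_lt hk]
  -- restrict the left sum to even-valued indices
  rw [← Finset.sum_filter_of_ne (p := fun j : ZMod (2 * n') => Even j.val)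
      (by
        intro j hj hfj
        by_contra hev
        exact hfj (hodd j (Nat.not_even_iff_odd.mp hev)))]
  refine Finset.sum_nbij' (i := fun j : ZMod (2 * n') => ((j.val / 2 : ℕ) : ZMod n'))
    (j := fun m : ZMod n' => ((2 * m.val : ℕ) : ZMod (2 * n'))) ?_ ?_ ?_ ?_ ?_
  · -- maps left set into right set
    intro j hj
    simp only [Finset.mem_filter, Finset.mem_univ, true_and] at hj ⊢
    obtain ⟨h1, h2⟩ := hj
    have hv : 2 * (j.val % n') = 2 * k.val := by
      have := congrArg ZMod.val h1
      rwa [hval2, hival] at this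
    obtain ⟨a, ha⟩ := h2
    have e1 : (2 : ZMod n') * ((j.val / 2 : ℕ) : ZMod n')
        = ((2 * (j.val / 2) : ℕ) : ZMod n') := by push_cast; ring
    rw [e1]
    have e2 : ((2 * (j.val / 2) : ℕ) : ZMod n') = ((k.val : ℕ) : ZMod n') := by
      rw [ZMod.natCast_eq_natCast_iff]
      show 2 * (j.val / 2) % n' = k.val % n'
      have hj2 : 2 * (j.val / 2) = j.val := by omega
      rw [hj2, Nat.mod_eq_of_lt hk]
      omega
    rw [e2, ZMod.natCast_val, ZMod.cast_id]
  · -- maps right set into left set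
    intro m hm
    simp only [Finset.mem_filter, Finset.mem_univ, true_and] at hm ⊢
    have hmval : (((2 * m.val : ℕ) : ZMod (2 * n'))).val = 2 * (m.val % n') := by
      rw [ZMod.val_natCast, Nat.mul_mod_mul_left]
    have hmlt : m.val < n' := ZMod.val_lt m
    have hm2 : 2 * m.val % n' = k.val := by
      have e2 : (2 : ZMod n') * m = ((2 * m.val : ℕ) : ZMod n') := by
        push_cast [ZMod.natCast_val, ZMod.cast_id]; ring
      rw [e2] at hm
      have : ((2 * m.val : ℕ) : ZMod n') = ((k.val : ℕ) : ZMod n') := by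
        rw [hm, ZMod.natCast_val, ZMod.cast_id]
      have h3 : 2 * m.val % n' = k.val % n' :=
        (ZMod.natCast_eq_natCast_iff _ _ _).mp this
      rwa [Nat.mod_eq_of_lt hk] at h3
    constructor
    · have e1 : (2 : ZMod (2 * n')) * ((2 * m.val : ℕ) : ZMod (2 * n'))
          = ((2 * (2 * m.val) : ℕ) : ZMod (2 * n')) := by push_cast; ring
      rw [e1, ZMod.natCast_eq_natCast_iff]
      show 2 * (2 * m.val) % (2 * n') = 2 * k.val % (2 * n')
      rw [Nat.mul_mod_mul_left, Nat.mul_mod_mul_left, Nat.mod_eq_of_lt hk, hm2]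
    · rw [hmval]
      exact ⟨m.val % n', by ring⟩
  · -- left inverse
    intro j hj
    simp only [Finset.mem_filter, Finset.mem_univ, true_and] at hj
    obtain ⟨h1, h2⟩ := hj
    obtain ⟨a, ha⟩ := h2
    have hjlt : j.val < 2 * n' := ZMod.val_lt j
    have hlt : j.val / 2 < n' := by omega
    show ((2 * (((j.val / 2 : ℕ) : ZMod n')).val : ℕ) : ZMod (2 * n')) = j
    rw [ZMod.val_natCast_of_lt hlt]
    have : 2 * (j.val / 2) = j.val := by omega
    rw [this, ZMod.natCast_val, ZMod.cast_id]
  · -- right inverse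
    intro m hm
    have hmlt : m.val < n' := ZMod.val_lt m
    have hmval : (((2 * m.val : ℕ) : ZMod (2 * n'))).val = 2 * m.val := by
      rw [ZMod.val_natCast, Nat.mul_mod_mul_left, Nat.mod_eq_of_lt hmlt]
    show (((((2 * m.val : ℕ) : ZMod (2 * n'))).val / 2 : ℕ) : ZMod n') = m
    rw [hmval]
    have : 2 * m.val / 2 = m.val := by omega
    rw [this, ZMod.natCast_val, ZMod.cast_id]
  · -- terms agree
    intro j hj
    simp only [Finset.mem_filter, Finset.mem_univ, true_and] at hj
    obtain ⟨h1, h2⟩ := hj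
    obtain ⟨a, ha⟩ := h2
    have hjlt : j.val < 2 * n' := ZMod.val_lt j
    have hlt : j.val / 2 < n' := by omega
    show f j = f ((2 * (((j.val / 2 : ℕ) : ZMod n')).val : ℕ) : ZMod (2 * n'))
    congr 1
    rw [ZMod.val_natCast_of_lt hlt]
    have : 2 * (j.val / 2) = j.val := by omega
    rw [this, ZMod.natCast_val, ZMod.cast_id]
end

section
/- For every X : ZMod n → ZMod 2, the vector 𝔟^{ι(2,n)} X is 𝔟-swept; that is, (𝔟^{ι(2,n)} X) j = 0 for every j : ZMod n whose canonical representative j.val is not divisible by 2^{ι(2,n)}. -/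
theorem baker_iterate_swept {n : ℕ} [NeZero n] (X : ZMod n → ZMod 2) :
    ∀ j : ZMod n, ¬ (2 ^ (padicValNat 2 n) ∣ j.val) →
      baker^[padicValNat 2 n] X j = 0 := by
  set k := padicValNat 2 n with hk
  have hdvd : (2 : ℕ) ^ k ∣ n := pow_padicValNat_dvd
  suffices h : ∀ m, m ≤ k → ∀ j : ZMod n, ¬ ((2 : ℕ) ^ m ∣ j.val) →
      baker^[m] X j = 0 from fun j hj => h k le_rfl j hj
  intro m
  induction m with
  | zero => intro _ j hj; exact absurd (one_dvd _) hj
  | succ m ih =>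
    intro hm j hj
    rw [Function.iterate_succ_apply']
    show (∑ i ∈ Finset.univ.filter (fun i : ZMod n => (2 : ZMod n) * i = j),
        baker^[m] X i) = 0
    apply Finset.sum_eq_zero
    intro i hi
    rw [Finset.mem_filter] at hi
    apply ih (le_trans (Nat.le_succ m) hm)
    intro hdi
    apply hj
    -- 2^(m+1) ∣ n
    have h2n : (2 : ℕ) ^ (m + 1) ∣ n := dvd_trans (pow_dvd_pow 2 hm) hdvd
    -- j.val ≡ 2 * i.val [MOD n]
    have hcast : ((2 * i.val : ℕ) : ZMod n) = ((j.val : ℕ) : ZMod n) := by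
      push_cast
      rw [ZMod.natCast_val, ZMod.natCast_val, ZMod.cast_id, ZMod.cast_id]
      exact hi.2
    have hmod : (2 * i.val) ≡ j.val [MOD n] := (ZMod.natCast_eq_natCast_iff _ _ _).mp hcast
    have hint : (n : ℤ) ∣ (j.val : ℤ) - (2 * i.val : ℕ) := hmod.dvd
    have h1 : ((2 : ℕ) ^ (m + 1) : ℤ) ∣ (j.val : ℤ) - (2 * i.val : ℕ) :=
      by exact_mod_cast dvd_trans (Int.natCast_dvd_natCast.mpr h2n) hint
    have h2 : ((2 : ℕ) ^ (m + 1) : ℤ) ∣ ((2 * i.val : ℕ) : ℤ) := by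
      have : ((2:ℕ)^m : ℤ) ∣ (i.val : ℤ) := by exact_mod_cast Int.natCast_dvd_natCast.mpr hdi
      push_cast at this ⊢
      rw [pow_succ, mul_comm ((2:ℤ)^m) 2]
      exact mul_dvd_mul_left 2 this
    have := dvd_add h1 h2
    rw [sub_add_cancel] at this
    exact_mod_cast this
end

section
/- For every n ≥ 1 and every X : ZMod n → ZMod 2 one has 𝔟^{ι(2,n) + 𝔠(n)} X = 𝔟^{ι(2,n)} X; in particular the Baker trajectory of every vector reaches a cycle after at most ι(2,n) steps and that cycle has length dividing 𝔠(n). -/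
/-- The critical number `𝔠(n)`: the multiplicative order of `2` modulo
`n / 2^{ι(2,n)}` when that quotient exceeds `1`, and `1` otherwise. -/
noncomputable def cFun (n : ℕ) : ℕ :=
  if 1 < n / 2 ^ (padicValNat 2 n) then orderOf (2 : ZMod (n / 2 ^ (padicValNat 2 n))) else 1

lemma baker_iterate_apply {n : ℕ} [NeZero n] (X : ZMod n → ZMod 2) (k : ℕ) (i : ZMod n) :
    baker^[k] X i
      = ∑ j ∈ Finset.univ.filter (fun j : ZMod n => (2 : ZMod n) ^ k * j = i), X j := by
  induction k generalizing i with
  | zero =>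
      simp [Finset.filter_eq']
  | succ k ih =>
      rw [Function.iterate_succ_apply', baker]
      simp only [ih]
      rw [Finset.sum_fiberwise_eq_sum_filter]
      apply Finset.sum_congr
      · apply Finset.filter_congr
        intro j _
        simp only [Finset.mem_filter, Finset.mem_univ, true_and]
        constructor
        · intro h; rw [← h]; ring
        · intro h; rw [← h]; ring
      · intros; rfl

lemma pow_eq {n : ℕ} [NeZero n] :
    (2 : ZMod n) ^ (padicValNat 2 n + cFun n) = (2 : ZMod n) ^ (padicValNat 2 n) := by
  set v := padicValNat 2 n
  set c := cFun n with hcdef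
  set m := n / 2 ^ v with hm
  have hn : n ≠ 0 := NeZero.ne n
  have hdvd : 2 ^ v ∣ n := pow_padicValNat_dvd
  have hnm : 2 ^ v * m = n := Nat.mul_div_cancel' hdvd
  have hmd : m ∣ 2 ^ (c) - 1 := by
    by_cases h1 : 1 < m
    · have hc : c = orderOf (2 : ZMod m) := by
        rw [hcdef]
        simp only [cFun, ← hm]
        rw [if_pos h1]
      have : ((2 : ℕ) : ZMod m) ^ (c) = 1 := by
        rw [hc]
        have : ((2 : ℕ) : ZMod m) = (2 : ZMod m) := by push_cast; ring
        rw [this]; exact pow_orderOf_eq_one _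
      have h2 : ((2 ^ (c) : ℕ) : ZMod m) = ((1 : ℕ) : ZMod m) := by
        push_cast at this ⊢; exact this
      have := (ZMod.natCast_eq_natCast_iff _ _ _).mp h2
      exact (Nat.modEq_iff_dvd' Nat.one_le_two_pow).mp this.symm
    · have hm0 : m ≠ 0 := by
        intro h; rw [h, mul_zero] at hnm; exact hn hnm.symm
      have : m = 1 := Nat.le_antisymm (Nat.not_lt.mp h1) (Nat.one_le_iff_ne_zero.mpr hm0)
      rw [this]; exact one_dvd _
  have hnd : n ∣ 2 ^ (v + c) - 2 ^ v := by
    rw [← hnm, pow_add]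
    have h2 : 2 ^ v * 2 ^ (c) - 2 ^ v = 2 ^ v * (2 ^ (c) - 1) := by
      rw [Nat.mul_sub, mul_one]
    rw [h2]
    exact Nat.mul_dvd_mul_left _ hmd
  have hle : 2 ^ v ≤ 2 ^ (v + c) := Nat.pow_le_pow_right (by norm_num) (Nat.le_add_right _ _)
  have hmeq : 2 ^ v ≡ 2 ^ (v + c) [MOD n] := (Nat.modEq_iff_dvd' hle).mpr hnd
  have := (ZMod.natCast_eq_natCast_iff _ _ n).mpr hmeq
  push_cast at this
  exact this.symm

theorem baker_iterate_periodic {n : ℕ} [NeZero n] (X : ZMod n → ZMod 2) :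
    baker^[padicValNat 2 n + cFun n] X = baker^[padicValNat 2 n] X := by
  funext i
  rw [baker_iterate_apply, baker_iterate_apply, pow_eq]
end

section
/- If X : ZMod n → ZMod 2 belongs to a cycle of the Baker transformation, i.e. there exists t > 0 with 𝔟^t X = X, then the state transition diagram of the automaton with rule X has height at most 1: for every state s : ZMod n → ZMod 2, the state C(X) *ᵥ s is cyclic for X. -/
open Matrix

/-- A state `s` is cyclic for the rule `X` if some positive power of the
automaton operator `C(X)` returns `s` to itself. -/
def IsCyclicState {n : ℕ} [NeZero n] (X s : ZMod n → ZMod 2) : Prop :=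
  ∃ m : ℕ, 0 < m ∧ (circulantVec X) ^ m *ᵥ s = s

lemma conv_eq_baker {n : ℕ} [NeZero n] (X : ZMod n → ZMod 2) (c : ZMod n) :
    ∑ d : ZMod n, X d * X (c - d) = baker X c := by
  unfold baker
  rw [← Finset.sum_filter_add_sum_filter_not Finset.univ
    (fun d : ZMod n => (2 : ZMod n) * d = c) (fun d => X d * X (c - d))]
  have h1 : ∑ d ∈ Finset.univ.filter (fun d : ZMod n => (2 : ZMod n) * d = c),
      X d * X (c - d) = ∑ d ∈ Finset.univ.filter (fun d : ZMod n => (2 : ZMod n) * d = c), X d := by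
    apply Finset.sum_congr rfl
    intro d hd
    rw [Finset.mem_filter] at hd
    have : c - d = d := by
      rw [← hd.2]; ring
    rw [this]
    rcases (by decide : ∀ x : ZMod 2, x * x = x) (X d) with h
    exact h
  have h2 : ∑ d ∈ Finset.univ.filter (fun d : ZMod n => ¬ (2 : ZMod n) * d = c),
      X d * X (c - d) = 0 := by
    apply Finset.sum_involution (fun d _ => c - d)
    · intro d _
      have : X d * X (c - d) + X (c - d) * X (c - (c - d)) = 0 := by
        have hcd : c - (c - d) = d := by ring
        rw [hcd, mul_comm]
        exact CharTwo.add_self_eq_zero _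
      exact this
    · intro d hd _
      rw [Finset.mem_filter] at hd
      intro heq
      apply hd.2
      have : c - d = d := heq
      rw [two_mul]
      linear_combination (this).symm
    · intro d hd
      rw [Finset.mem_filter] at hd ⊢
      refine ⟨Finset.mem_univ _, fun heq => hd.2 ?_⟩
      rw [two_mul] at heq ⊢
      linear_combination -heq
    · intro d _
      ring
  rw [h1, h2, add_zero]

lemma circulant_sq {n : ℕ} [NeZero n] (X : ZMod n → ZMod 2) :
    circulantVec X ^ 2 = circulantVec (baker X) := by
  ext i j
  rw [sq]
  show ∑ k : ZMod n, X (k - i) * X (j - k) = baker X (j - i)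
  rw [← conv_eq_baker X (j - i)]
  apply Fintype.sum_equiv (Equiv.subRight i)
  intro k
  simp [Equiv.subRight]

lemma circulant_pow_two_pow {n : ℕ} [NeZero n] (X : ZMod n → ZMod 2) (t : ℕ) :
    circulantVec X ^ (2 ^ t) = circulantVec (baker^[t] X) := by
  induction t with
  | zero => simp
  | succ t ih =>
    rw [pow_succ, pow_mul, ih, circulant_sq, Function.iterate_succ_apply']

theorem height_le_one_of_baker_cyclic {n : ℕ} [NeZero n] (X : ZMod n → ZMod 2)
    (h : ∃ t : ℕ, 0 < t ∧ baker^[t] X = X) :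
    ∀ s : ZMod n → ZMod 2, IsCyclicState X (circulantVec X *ᵥ s) := by
  obtain ⟨t, ht, hX⟩ := h
  intro s
  refine ⟨2 ^ t - 1, ?_, ?_⟩
  · have : 2 ≤ 2 ^ t := by
      calc 2 = 2 ^ 1 := (pow_one 2).symm
      _ ≤ 2 ^ t := Nat.pow_le_pow_right (by norm_num) ht
    omega
  · rw [mulVec_mulVec, ← pow_succ]
    have h2 : 2 ^ t - 1 + 1 = 2 ^ t := by
      have : 1 ≤ 2 ^ t := Nat.one_le_two_pow
      omega
    rw [h2, circulant_pow_two_pow, hX]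
end

section
/- Let n ≥ 1 be odd and X : ZMod n → ZMod 2. If det C(X) = 1 (determinant over ZMod 2) then every state s : ZMod n → ZMod 2 is cyclic for X (the height of the state transition diagram is 0); if det C(X) = 0 then every state of the form C(X) *ᵥ s is cyclic for X and there exists a state that is not cyclic for X (the height is exactly 1). In short, the height equals 1 − det₂ C(X). -/
open Matrix

set_option linter.unusedSectionVars false

section aux
variable {n : ℕ} [NeZero n]

lemma two_unit (hodd : Odd n) : IsUnit (2 : ZMod n) := by
  have : IsUnit ((2 : ℕ) : ZMod n) := by
    rw [ZMod.isUnit_iff_coprime]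
    exact hodd.coprime_two_left
  simpa using this

lemma pow_mulVec_succ (C : Matrix (ZMod n) (ZMod n) (ZMod 2)) (j : ℕ) (s : ZMod n → ZMod 2) :
    C ^ (j + 1) *ᵥ s = C *ᵥ (C ^ j *ᵥ s) := by
  rw [Matrix.mulVec_mulVec, ← pow_succ']

/-- the squaring identity: `C(X)^2` is a submatrix-reindexing of `C(X)`. -/
lemma circ_sq (hodd : Odd n) (X : ZMod n → ZMod 2) :
    ∃ e : ZMod n ≃ ZMod n,
      circulantVec X * circulantVec X = (circulantVec X).submatrix e e := by
  obtain ⟨u, hu⟩ := two_unit (n := n) hodd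
  refine ⟨⟨fun x => ↑u⁻¹ * x, fun x => ↑u * x, fun x => by simp [← mul_assoc], fun x => by
    simp [← mul_assoc]⟩, ?_⟩
  ext i j
  have key : ∀ x : ZMod 2, x * x = x := by decide
  have key2 : ∀ x y : ZMod 2, x * y + y * x = 0 := by decide
  show (∑ k, X (k - i) * X (j - k)) = X ((↑u⁻¹ * j) - (↑u⁻¹ * i))
  have hd : (↑u⁻¹ * j) - (↑u⁻¹ * i) = ↑u⁻¹ * (j - i) := by ring
  set a₀ : ZMod n := ↑u⁻¹ * (j - i) with ha0
  have h2a : a₀ + a₀ = j - i := by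
    have h : (2 : ZMod n) * a₀ = j - i := by
      rw [← hu, ha0, ← mul_assoc]
      simp
    linear_combination h - two_mul a₀
  set k₀ : ZMod n := a₀ + i with hk0
  rw [hd]
  rw [Finset.sum_eq_add_sum_sdiff_singleton_of_mem (Finset.mem_univ k₀) (fun k => X (k - i) * X (j - k))]
  have hterm : X (k₀ - i) * X (j - k₀) = X a₀ := by
    have h1 : k₀ - i = a₀ := by rw [hk0]; ring
    have h2 : j - k₀ = a₀ := by
      rw [hk0]; linear_combination - h2a
    rw [h1, h2, key]
  rw [hterm]
  have hzero : ∑ k ∈ Finset.univ \ {k₀}, X (k - i) * X (j - k) = 0 := by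
    apply Finset.sum_involution (g := fun k _ => i + j - k)
    · intro k _
      have h1 : (i + j - k) - i = j - k := by ring
      have h2 : j - (i + j - k) = k - i := by ring
      rw [h1, h2]
      exact key2 _ _
    · intro k hk _
      simp only [Finset.mem_sdiff, Finset.mem_univ, Finset.mem_singleton, true_and] at hk
      intro hgk
      apply hk
      have h3 : k + k = i + j := by linear_combination - hgk
      have hki : (k - i) + (k - i) = j - i := by linear_combination h3
      have h4 : k - i = a₀ := by
        have hinj : (2 : ZMod n) * (k - i) = (2 : ZMod n) * a₀ := by
          linear_combination hki - h2a + two_mul (k-i) - two_mul a₀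
        have h7 := congrArg (fun x => (↑u⁻¹ : ZMod n) * x) hinj
        simpa [← hu, ← mul_assoc] using h7
      rw [hk0, ← h4]; ring
    · intro k hk
      simp only [Finset.mem_sdiff, Finset.mem_univ, Finset.mem_singleton, true_and] at hk ⊢
      intro hgk
      apply hk
      -- i + j - k = k₀ = a₀ + i ⇒ k = j - a₀ = a₀ + i = k₀
      have : k = j - a₀ := by linear_combination - hgk
      rw [this, hk0]
      linear_combination - h2a
    · intro k _; ring
  rw [hzero, add_zero]

lemma ker_sq (hodd : Odd n) (X : ZMod n → ZMod 2) (s : ZMod n → ZMod 2)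
    (h : circulantVec X *ᵥ (circulantVec X *ᵥ s) = 0) : circulantVec X *ᵥ s = 0 := by
  obtain ⟨e, he⟩ := circ_sq hodd X
  set C := circulantVec X
  have hrank : (C * C).rank = C.rank := by rw [he]; exact Matrix.rank_submatrix C e e
  have hker_le : LinearMap.ker C.mulVecLin ≤ LinearMap.ker (C * C).mulVecLin := by
    intro x hx
    simp only [LinearMap.mem_ker, Matrix.mulVecLin_apply] at *
    rw [← Matrix.mulVec_mulVec, hx, Matrix.mulVec_zero]
  have hrn1 := LinearMap.finrank_range_add_finrank_ker C.mulVecLin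
  have hrn2 := LinearMap.finrank_range_add_finrank_ker (C * C).mulVecLin
  have hfr : Module.finrank (ZMod 2) (LinearMap.ker C.mulVecLin)
      = Module.finrank (ZMod 2) (LinearMap.ker (C * C).mulVecLin) := by
    have h1 : C.rank = Module.finrank (ZMod 2) (LinearMap.range C.mulVecLin) := rfl
    have h2 : (C * C).rank = Module.finrank (ZMod 2) (LinearMap.range (C * C).mulVecLin) := rfl
    omega
  have heq : LinearMap.ker C.mulVecLin = LinearMap.ker (C * C).mulVecLin :=
    Submodule.eq_of_le_of_finrank_eq hker_le hfr
  have hs : s ∈ LinearMap.ker (C * C).mulVecLin := by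
    simp only [LinearMap.mem_ker, Matrix.mulVecLin_apply]
    rw [← Matrix.mulVec_mulVec]; exact h
  rw [← heq] at hs
  simpa using hs

lemma ker_pow (hodd : Odd n) (X : ZMod n → ZMod 2) (s : ZMod n → ZMod 2) :
    ∀ k : ℕ, (circulantVec X) ^ (k + 1) *ᵥ s = 0 → circulantVec X *ᵥ s = 0 := by
  intro k
  induction k with
  | zero => intro h; simpa using h
  | succ k ih =>
    intro h
    set C := circulantVec X
    have h2 : C *ᵥ (C *ᵥ (C ^ k *ᵥ s)) = 0 := by
      rw [← pow_mulVec_succ, ← pow_mulVec_succ]; exact h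
    have h3 := ker_sq hodd X (C ^ k *ᵥ s) h2
    apply ih
    rw [pow_mulVec_succ]; exact h3

end aux

theorem height_eq_one_sub_det_of_odd {n : ℕ} [NeZero n] (hodd : Odd n)
    (X : ZMod n → ZMod 2) :
    ((circulantVec X).det = 1 → ∀ s : ZMod n → ZMod 2, IsCyclicState X s) ∧
    ((circulantVec X).det = 0 →
      (∀ s : ZMod n → ZMod 2, IsCyclicState X (circulantVec X *ᵥ s)) ∧
      ∃ s : ZMod n → ZMod 2, ¬ IsCyclicState X s) := by
  set C := circulantVec X with hC
  constructor
  · intro hdet s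
    have hu : IsUnit C := by
      rw [Matrix.isUnit_iff_isUnit_det, hdet]; exact isUnit_one
    obtain ⟨u, hu⟩ := hu
    have hpos : 0 < orderOf u := orderOf_pos u
    refine ⟨orderOf u, hpos, ?_⟩
    have h1 : (u : Matrix (ZMod n) (ZMod n) (ZMod 2)) ^ orderOf u = 1 := by
      rw [← Units.val_pow_eq_pow_val, pow_orderOf_eq_one u, Units.val_one]
    rw [hu] at h1
    rw [h1, Matrix.one_mulVec]
  · intro hdet
    constructor
    · intro s
      obtain ⟨k, l, hne, heq⟩ :=
        Finite.exists_ne_map_eq_of_infinite (fun k : ℕ => C ^ (k + 1) *ᵥ s)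
      wlog hkl : l < k generalizing k l
      · exact this l k hne.symm heq.symm (by omega)
      have hker : C ^ (l + 1) *ᵥ (C ^ (k - l) *ᵥ s - s) = 0 := by
        rw [Matrix.mulVec_sub, Matrix.mulVec_mulVec, ← pow_add]
        have h5 : l + 1 + (k - l) = k + 1 := by omega
        rw [h5]
        simpa [sub_eq_zero] using heq
      have h1 : C *ᵥ (C ^ (k - l) *ᵥ s - s) = 0 := ker_pow hodd X _ l hker
      rw [Matrix.mulVec_sub, sub_eq_zero] at h1
      refine ⟨k - l, by omega, ?_⟩
      rw [Matrix.mulVec_mulVec, ← pow_succ, pow_succ', ← Matrix.mulVec_mulVec, h1]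
    · have hnu : ¬ IsUnit C := by
        rw [Matrix.isUnit_iff_isUnit_det, hdet]
        simp
      have hns : ¬ Function.Surjective (C *ᵥ ·) := by
        rw [Matrix.mulVec_surjective_iff_isUnit]; exact hnu
      simp only [Function.Surjective, not_forall] at hns
      obtain ⟨s, hs⟩ := hns
      refine ⟨s, ?_⟩
      rintro ⟨m, hm, hms⟩
      apply hs
      refine ⟨C ^ (m - 1) *ᵥ s, ?_⟩
      show C *ᵥ (C ^ (m-1) *ᵥ s) = s
      rw [← pow_mulVec_succ]
      have h6 : m - 1 + 1 = m := by omega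
      rw [h6, hms]
end

section
/- For every n ≥ 1, every rule X : ZMod n → ZMod 2, and every state s : ZMod n → ZMod 2, the state C(X)^(2^{ι(2,n)}) *ᵥ s is cyclic for X; i.e. the height of the state transition diagram of the automaton with rule X is at most 2^{ι(2,n)}. -/
open Matrix

namespace HeightAux

open Polynomial

variable {n : ℕ} [NeZero n]

/-- The cyclic shift matrix. -/
def shiftM (n : ℕ) [NeZero n] : Matrix (ZMod n) (ZMod n) (ZMod 2) :=
  circulantVec (fun k => if k = 1 then 1 else 0)

lemma shift_mul (Y : ZMod n → ZMod 2) :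
    shiftM n * circulantVec Y = circulantVec (fun d => Y (d - 1)) := by
  ext i j
  simp only [shiftM, circulantVec, Matrix.mul_apply, Matrix.of_apply, ite_mul, one_mul, zero_mul]
  rw [Finset.sum_eq_single (1 + i)]
  · rw [if_pos (by ring)]
    congr 1
    ring
  · intro t _ ht
    rw [if_neg (fun h => ht (sub_eq_iff_eq_add.mp h))]
  · intro h; exact absurd (Finset.mem_univ _) h

lemma circulantVec_delta_zero :
    circulantVec (fun d : ZMod n => if d = 0 then (1 : ZMod 2) else 0) = 1 := by
  ext i j
  simp only [circulantVec, Matrix.of_apply, Matrix.one_apply, sub_eq_zero]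
  by_cases h : i = j <;> simp [h, eq_comm]

lemma shift_pow (m : ℕ) :
    shiftM n ^ m = circulantVec (fun d => if d = (m : ZMod n) then 1 else 0) := by
  induction m with
  | zero => simpa using circulantVec_delta_zero.symm
  | succ m ih =>
      rw [pow_succ', ih, shift_mul]
      congr 1
      funext d
      rw [Nat.cast_add, Nat.cast_one]
      simp only [sub_eq_iff_eq_add]

lemma shift_pow_n : shiftM n ^ n = 1 := by
  rw [shift_pow, ZMod.natCast_self]
  exact circulantVec_delta_zero

/-- Every circulant is a polynomial in the shift. -/
lemma circulant_eq_aeval (X : ZMod n → ZMod 2) :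
    circulantVec X
      = Polynomial.aeval (shiftM n) (∑ k ∈ Finset.range n, C (X k) * Polynomial.X ^ k) := by
  rw [map_sum]
  simp only [_root_.map_mul, aeval_C, map_pow, aeval_X, shift_pow, ← Algebra.smul_def]
  ext i j
  rw [Matrix.sum_apply]
  simp only [Matrix.smul_apply, circulantVec, Matrix.of_apply, smul_eq_mul, mul_ite, mul_one,
    mul_zero]
  rw [Finset.sum_eq_single (j - i).val]
  · rw [if_pos (ZMod.natCast_rightInverse _).symm]
    congr 1
    exact (ZMod.natCast_rightInverse _).symm
  · intro k hk hne
    rw [if_neg]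
    intro h
    apply hne
    rw [h, ZMod.val_natCast, Nat.mod_eq_of_lt (Finset.mem_range.mp hk)]
  · intro h
    exact absurd (Finset.mem_range.mpr (ZMod.val_lt _)) h

lemma exists_pow_dvd (q : ℕ) (hq0 : q ≠ 0) (hodd : ¬ 2 ∣ q) (f : Polynomial (ZMod 2)) :
    ∃ k : ℕ, 0 < k ∧ ((X : Polynomial (ZMod 2)) ^ q - 1) ∣ f ^ 2 ^ k - f := by
  set p : Polynomial (ZMod 2) := X ^ q - 1 with hp
  have hp' : p = X ^ q - C 1 := by rw [hp, C_1]
  have hmonic : p.Monic := by rw [hp']; exact monic_X_pow_sub_C 1 hq0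
  have hdeg : p.natDegree = q := by rw [hp']; exact natDegree_X_pow_sub_C
  have hpne1 : p ≠ 1 := by
    intro h
    rw [h, natDegree_one] at hdeg
    exact hq0 hdeg.symm
  have hsf : Squarefree p := by
    refine (X_pow_sub_one_separable_iff.mpr ?_).squarefree
    rw [Ne, ZMod.natCast_eq_zero_iff]
    exact hodd
  -- pigeonhole on the residues of f ^ 2 ^ j modulo p
  obtain ⟨a, b, hab, hfab⟩ := Finite.exists_ne_map_eq_of_infinite
    (fun j : ℕ => fun i : Fin q => ((f ^ 2 ^ j) %ₘ p).coeff i)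
  have hrem : ∀ a b : ℕ,
      (fun i : Fin q => ((f ^ 2 ^ a) %ₘ p).coeff i)
        = (fun i : Fin q => ((f ^ 2 ^ b) %ₘ p).coeff i) →
      p ∣ f ^ 2 ^ b - f ^ 2 ^ a := by
    intro a b h
    rw [← modByMonic_eq_zero_iff_dvd hmonic, sub_modByMonic]
    have : (f ^ 2 ^ a) %ₘ p = (f ^ 2 ^ b) %ₘ p := by
      ext i
      by_cases hi : i < q
      · exact congrFun h ⟨i, hi⟩
      · rw [coeff_eq_zero_of_natDegree_lt, coeff_eq_zero_of_natDegree_lt]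
        · exact lt_of_lt_of_le (natDegree_modByMonic_lt _ hmonic hpne1)
            (by rw [hdeg]; exact Nat.le_of_not_lt hi)
        · exact lt_of_lt_of_le (natDegree_modByMonic_lt _ hmonic hpne1)
            (by rw [hdeg]; exact Nat.le_of_not_lt hi)
    rw [this, sub_self]
  -- descent using squarefreeness
  have descent : ∀ a c : ℕ, 0 < c → p ∣ f ^ 2 ^ (a + c) - f ^ 2 ^ a → p ∣ f ^ 2 ^ c - f := by
    intro a
    induction a with
    | zero => intro c hc h; simpa using h
    | succ a ih =>
        intro c hc h
        apply ih c hc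
        have e : a + 1 + c = a + c + 1 := by omega
        have key : (f ^ 2 ^ (a + c) - f ^ 2 ^ a) ^ 2
            = f ^ 2 ^ (a + c + 1) - f ^ 2 ^ (a + 1) := by
          rw [sub_pow_char, ← pow_mul, ← pow_mul, ← pow_succ, ← pow_succ]
        rw [e, ← key] at h
        exact (hsf.dvd_pow_iff_dvd two_ne_zero).mp h
  rcases Nat.lt_or_ge a b with hlt | hge
  · refine ⟨b - a, by omega, descent a (b - a) (by omega) ?_⟩
    have : a + (b - a) = b := by omega
    rw [this]
    exact hrem a b hfab
  · have hlt : b < a := by omega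
    refine ⟨a - b, by omega, descent b (a - b) (by omega) ?_⟩
    have : b + (a - b) = a := by omega
    rw [this]
    exact hrem b a hfab.symm

end HeightAux

theorem height_le_two_pow_val {n : ℕ} [NeZero n] (X : ZMod n → ZMod 2) :
    ∀ s : ZMod n → ZMod 2,
      IsCyclicState X ((circulantVec X) ^ (2 ^ (padicValNat 2 n)) *ᵥ s) := by
  classical
  intro s
  open Polynomial HeightAux in
  set v := padicValNat 2 n with hvdef
  have hn : n ≠ 0 := NeZero.ne n
  have hfact : n.factorization 2 = v := Nat.factorization_def n Nat.prime_two
  set q := n / 2 ^ v with hqdef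
  have hq0 : q ≠ 0 := by
    have := Nat.ordCompl_pos 2 hn
    rw [hfact] at this
    omega
  have hodd : ¬ 2 ∣ q := by
    have := Nat.not_dvd_ordCompl Nat.prime_two hn
    rwa [hfact] at this
  have hqn : q * 2 ^ v = n := by
    have := Nat.ordProj_mul_ordCompl_eq_self n 2
    rw [hfact] at this
    rw [mul_comm]
    exact this
  set f : Polynomial (ZMod 2) := ∑ k ∈ Finset.range n, C (X k) * Polynomial.X ^ k with hf
  obtain ⟨k, hkpos, hdvd⟩ := exists_pow_dvd q hq0 hodd f
  have hxn : ((Polynomial.X : Polynomial (ZMod 2)) ^ n - 1) ∣ f ^ 2 ^ (v + k) - f ^ 2 ^ v := by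
    have h1 : ((Polynomial.X : Polynomial (ZMod 2)) ^ q - 1) ^ 2 ^ v
        ∣ (f ^ 2 ^ k - f) ^ 2 ^ v := pow_dvd_pow_of_dvd hdvd _
    rw [sub_pow_char_pow, sub_pow_char_pow, one_pow, ← pow_mul, ← pow_mul] at h1
    rw [hqn, ← pow_add, Nat.add_comm k v] at h1
    exact h1
  obtain ⟨g, hg⟩ := hxn
  have hA : (circulantVec X) ^ 2 ^ (v + k) = (circulantVec X) ^ 2 ^ v := by
    have h2 := congrArg (Polynomial.aeval (shiftM n)) hg
    simp only [map_sub, map_pow, _root_.map_mul, _root_.map_one, aeval_X] at h2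
    rw [shift_pow_n, sub_self, zero_mul, sub_eq_zero] at h2
    rw [circulant_eq_aeval X, ← hf]
    exact h2
  have hlt : 2 ^ v < 2 ^ (v + k) := Nat.pow_lt_pow_right one_lt_two (by omega)
  refine ⟨2 ^ (v + k) - 2 ^ v, by omega, ?_⟩
  rw [Matrix.mulVec_mulVec, ← pow_add, Nat.sub_add_cancel (le_of_lt hlt), hA]
end

section
/- Let X : ZMod n → ZMod 2 and let m be a natural number such that 𝔟^m X belongs to a cycle of the Baker transformation, i.e. there exists t > 0 with 𝔟^{m+t} X = 𝔟^m X. Then for every state s : ZMod n → ZMod 2, the state C(X)^(2^m) *ᵥ s is cyclic for X; i.e. the height of the state transition diagram of the automaton with rule X is at most 2^m. -/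
open Matrix

lemma circulantVec_sq {n : ℕ} [NeZero n] (X : ZMod n → ZMod 2) :
    circulantVec X * circulantVec X = circulantVec (baker X) := by
  ext i j
  simp only [circulantVec, Matrix.mul_apply, Matrix.of_apply, baker]
  set d := j - i with hd
  have reindex : ∑ k : ZMod n, X (k - i) * X (j - k)
      = ∑ a : ZMod n, X a * X (d - a) := by
    refine Finset.sum_nbij' (fun k => k - i) (fun a => a + i) ?_ ?_ ?_ ?_ ?_ <;>
      intros <;> simp [hd]
  rw [reindex]
  rw [← Finset.sum_filter_add_sum_filter_not Finset.univ
    (fun a : ZMod n => (2 : ZMod n) * a = d)]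
  have h2 : ∑ a ∈ Finset.univ.filter (fun a : ZMod n => ¬ (2 : ZMod n) * a = d),
      X a * X (d - a) = 0 := by
    apply Finset.sum_involution (g := fun a _ => d - a)
    · intro a _
      have : X a * X (d - a) + X (d - a) * X (d - (d - a)) = 0 := by
        have : d - (d - a) = a := by ring
        rw [this, mul_comm]
        exact CharTwo.add_self_eq_zero _
      exact this
    · intro a ha _ hcontra
      simp only [Finset.mem_filter, Finset.mem_univ, true_and] at ha
      apply ha
      linear_combination -hcontra
    · intro a ha
      simp only [Finset.mem_filter, Finset.mem_univ, true_and] at ha ⊢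
      intro hcontra; apply ha; linear_combination -hcontra
    · intro a _; ring
  rw [h2, add_zero]
  apply Finset.sum_congr rfl
  intro a ha
  simp only [Finset.mem_filter, Finset.mem_univ, true_and] at ha
  have hda : d - a = a := by linear_combination -ha
  rw [hda]
  have : ∀ x : ZMod 2, x * x = x := by decide
  exact this _

lemma circulantVec_pow_two_pow {n : ℕ} [NeZero n] (X : ZMod n → ZMod 2) (m : ℕ) :
    (circulantVec X) ^ (2 ^ m) = circulantVec (baker^[m] X) := by
  induction m with
  | zero => simp
  | succ m ih =>
    rw [pow_succ, pow_mul, ih, sq, circulantVec_sq, Function.iterate_succ_apply']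

theorem height_le_two_pow_of_baker_cycle {n : ℕ} [NeZero n] (X : ZMod n → ZMod 2)
    (m : ℕ) (h : ∃ t : ℕ, 0 < t ∧ baker^[m + t] X = baker^[m] X) :
    ∀ s : ZMod n → ZMod 2, IsCyclicState X ((circulantVec X) ^ (2 ^ m) *ᵥ s) := by
  obtain ⟨t, ht, hcyc⟩ := h
  intro s
  have key : (circulantVec X) ^ (2 ^ (m + t)) = (circulantVec X) ^ (2 ^ m) := by
    rw [circulantVec_pow_two_pow, circulantVec_pow_two_pow, hcyc]
  refine ⟨2 ^ (m + t) - 2 ^ m, ?_, ?_⟩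
  · have : 2 ^ m < 2 ^ (m + t) := by
      apply Nat.pow_lt_pow_right (by norm_num); omega
    omega
  · rw [Matrix.mulVec_mulVec, ← pow_add]
    have : 2 ^ (m + t) - 2 ^ m + 2 ^ m = 2 ^ (m + t) := by
      have : 2 ^ m ≤ 2 ^ (m + t) := Nat.pow_le_pow_right (by norm_num) (by omega)
      omega
    rw [this, key]
end

section
/- For every n ≥ 1 and every rule X : ZMod n → ZMod 2, the length of every cycle in the state transition diagram of the automaton with rule X divides c*(n) = 2^{ι(2,n)} · (2^{𝔠(n)} − 1); equivalently, every state s that is cyclic for X satisfies C(X)^{c*(n)} *ᵥ s = s. -/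
open Matrix

/-!
The circulant matrices over `𝔽₂` are the image of the group algebra `𝔽₂[ℤ/n]`, a commutative
algebra of characteristic 2 in which `f ^ 2 ^ k` is `f` with its support pushed forward along
multiplication by `2 ^ k`. Write `n = 2 ^ v * n'` with `n'` odd and `c = 𝔠(n)`. Since
`n' ∣ 2 ^ c - 1`, multiplication by `2 ^ (v + c)` and by `2 ^ v` agree on `ℤ/n`, so
`C ^ (2 ^ v + c*) = C ^ 2 ^ v`: the powers of `C` are periodic with period `c*` from `2 ^ v` on.
A cyclic state is fixed by arbitrarily high powers of `C`, hence by `C ^ c*`.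
-/

namespace AddMonoidAlgebra

variable {p : ℕ} [Fact p.Prime] {G : Type*} [AddCommMonoid G]

instance : CharP (AddMonoidAlgebra (ZMod p) G) p := charP_of_injective_algebraMap' (ZMod p) p

theorem pow_char_pow_eq_mapDomain (f : AddMonoidAlgebra (ZMod p) G) (k : ℕ) :
    f ^ p ^ k = mapDomain (p ^ k • ·) f := by
  induction f using induction_linear with
  | zero => rw [zero_pow (pow_ne_zero _ (Fact.out : p.Prime).ne_zero), mapDomain_zero]
  | add f g hf hg => rw [add_pow_char_pow, hf, hg, mapDomain_add]
  | single a r => rw [single_pow, ZMod.pow_card_pow, mapDomain_single]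

end AddMonoidAlgebra

section Circulant

variable (R : Type*) (G : Type*) [AddCommGroup G] [Fintype G] [DecidableEq G]

def translationHom [NonAssocSemiring R] : Multiplicative G →* Matrix G G R where
  toFun a := (Equiv.addLeft a.toAdd).permMatrix R
  map_one' := by simp
  map_mul' a b := by
    rw [mul_comm, toAdd_mul, Equiv.addLeft_add, Matrix.permMatrix_mul]

variable [CommSemiring R]

noncomputable def circulantAlgHom : AddMonoidAlgebra R G →ₐ[R] Matrix G G R :=
  AddMonoidAlgebra.lift R (Matrix G G R) G (translationHom R G)

theorem circulantAlgHom_apply (f : AddMonoidAlgebra R G) (i j : G) :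
    circulantAlgHom R G f i j = f.coeff (j - i) := by
  induction f using AddMonoidAlgebra.induction_linear with
  | zero => simp
  | add f g hf hg => simp [hf, hg]
  | single a r =>
    simp [circulantAlgHom, translationHom, Finsupp.single_apply, PEquiv.toMatrix_apply,
      eq_sub_iff_add_eq]

end Circulant

theorem dvd_two_pow_padicValNat_mul_two_pow_cFun_sub_one (n : ℕ) [NeZero n] :
    n ∣ 2 ^ padicValNat 2 n * (2 ^ cFun n - 1) := by
  set n' := n / 2 ^ padicValNat 2 n
  have hn : 2 ^ padicValNat 2 n * n' = n := Nat.mul_div_cancel' pow_padicValNat_dvd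
  conv_lhs => rw [← hn]
  refine Nat.mul_dvd_mul_left _ ?_
  by_cases h : 1 < n'
  · rw [cFun, if_pos h, ← ZMod.natCast_eq_zero_iff, Nat.cast_sub Nat.one_le_two_pow]
    simp [pow_orderOf_eq_one]
  · have hpos : 0 < n' := Nat.pos_of_ne_zero fun h0 => NeZero.ne n (by rw [← hn, h0, mul_zero])
    rw [show n' = 1 by omega]
    exact one_dvd _

theorem two_pow_padicValNat_add_cFun (n : ℕ) [NeZero n] :
    (2 : ZMod n) ^ (padicValNat 2 n + cFun n) = 2 ^ padicValNat 2 n := by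
  have h := (ZMod.natCast_eq_zero_iff _ n).mpr (dvd_two_pow_padicValNat_mul_two_pow_cFun_sub_one n)
  push_cast [Nat.one_le_two_pow] at h
  linear_combination h

section Periodic

variable {M α : Type*} [Monoid M] {a : M} {i p : ℕ}

theorem pow_add_eq_pow_of_le (hper : a ^ (i + p) = a ^ i) {j : ℕ} (hij : i ≤ j) :
    a ^ (j + p) = a ^ j := by
  obtain ⟨d, rfl⟩ := Nat.exists_eq_add_of_le hij
  rw [add_right_comm, pow_add, hper, ← pow_add]

theorem pow_smul_eq_self_of_pow_add_eq [MulAction M α] {s : α} {m : ℕ}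
    (hper : a ^ (i + p) = a ^ i) (hm : 0 < m) (hs : a ^ m • s = s) : a ^ p • s = s := by
  have hmi : a ^ (m * i) • s = s := by
    rw [pow_mul, ← MulAction.mem_stabilizerSubmonoid_iff]
    exact pow_mem hs i
  rw [← hmi, smul_smul, ← pow_add, add_comm,
    pow_add_eq_pow_of_le hper (Nat.le_mul_of_pos_left i hm)]

end Periodic

theorem circulantVec_eq_circulantAlgHom {n : ℕ} [NeZero n] (X : ZMod n → ZMod 2) :
    circulantVec X =
      circulantAlgHom (ZMod 2) (ZMod n) (.ofCoeff (Finsupp.equivFunOnFinite.symm X)) := by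
  ext i j
  rw [circulantAlgHom_apply]
  rfl

theorem circulantVec_pow_two_pow_eq {n : ℕ} [NeZero n] (X : ZMod n → ZMod 2) {i j : ℕ}
    (h : (2 : ZMod n) ^ i = 2 ^ j) : circulantVec X ^ 2 ^ i = circulantVec X ^ 2 ^ j := by
  have hsmul : (2 ^ i • · : ZMod n → ZMod n) = (2 ^ j • ·) := by
    funext a
    simp only [nsmul_eq_mul, Nat.cast_pow, Nat.cast_ofNat, h]
  rw [circulantVec_eq_circulantAlgHom, ← map_pow, ← map_pow,
    AddMonoidAlgebra.pow_char_pow_eq_mapDomain, AddMonoidAlgebra.pow_char_pow_eq_mapDomain, hsmul]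

theorem cycle_length_dvd_cStar {n : ℕ} [NeZero n] (X : ZMod n → ZMod 2) :
    ∀ s : ZMod n → ZMod 2, IsCyclicState X s →
      (circulantVec X) ^ (2 ^ (padicValNat 2 n) * (2 ^ (cFun n) - 1)) *ᵥ s = s := by
  rintro s ⟨m, hm, hs⟩
  have hexp : 2 ^ padicValNat 2 n + 2 ^ padicValNat 2 n * (2 ^ cFun n - 1) =
      2 ^ (padicValNat 2 n + cFun n) := by
    rw [add_comm, ← mul_add_one, Nat.sub_add_cancel Nat.one_le_two_pow, pow_add]
  have hper := circulantVec_pow_two_pow_eq X (two_pow_padicValNat_add_cFun n)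
  rw [← hexp] at hper
  -- `*ᵥ` is the `smul` of the module structure of square matrices on vectors
  exact pow_smul_eq_self_of_pow_add_eq hper hm hs
end
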